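/- Let A_α = det_{1≤i,j≤n}(x_i^{α_j} - x_i^{-α_j}) for α = (α_1,...,α_n), and let p̄_r = Σ_{i=1}^n (x_i^r + x_i^{-r}). Then p̄_r · A_α = Σ_{j=1}^n A_{α + r·ε_j} + Σ_{j=1}^n A_{α - r·ε_j}, where ε_j is the j-th standard basis vector. -/

import Mathlib

/-!
Multiplying row `i` of `(x_i^{α_j} - x_i^{-α_j})` by `x_i^r + x_i^{-r}` turns it into the sum of
the rows with `α_j ± r` in place of `α_j`. Summed over `i`, these row replacements give the same
total as replacing one column at a time, and replacing column `j` gives exactly the matrix of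
`A_{α ± r ε_j}`.
-/

open scoped BigOperators

noncomputable section

/-- The field of rational functions in `n` variables over `ℚ`; the variables
`x_i` are invertible there, so Laurent expressions make sense. -/
abbrev K (n : ℕ) := FractionRing (MvPolynomial (Fin n) ℚ)

/-- The variables `x_i`. -/
def X {n : ℕ} (i : Fin n) : K n :=
  algebraMap (MvPolynomial (Fin n) ℚ) (K n) (MvPolynomial.X i)

/-- `A_α = det(x_i^{α_j} - x_i^{-α_j})`. -/
def A (n : ℕ) (α : Fin n → ℤ) : K n :=
  Matrix.det (Matrix.of fun i j : Fin n => X i ^ (α j) - X i ^ (-(α j)))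

namespace Matrix

variable {m R : Type*} [Fintype m] [DecidableEq m] [CommRing R]

/-- Both sides are the derivative of `det (M + t • N)` at `t = 0`, expanded by rows and by
columns respectively. -/
theorem sum_det_updateRow_eq_sum_det_updateCol (M N : Matrix m m R) :
    ∑ i, (M.updateRow i (N i)).det = ∑ j, (M.updateCol j (fun i => N i j)).det := by
  simp only [det_apply']
  rw [Finset.sum_comm, Finset.sum_comm (γ := m)]
  refine Finset.sum_congr rfl fun σ _ => (Fintype.sum_equiv σ _ _ fun j => ?_).symm
  congr 1
  refine Finset.prod_congr rfl fun k _ => ?_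
  by_cases h : k = j
  · subst h; simp
  · rw [updateCol_ne h, updateRow_ne (fun hσ => h (σ.injective hσ))]

theorem sum_mul_det_eq_sum_det_updateCol_add (M P Q : Matrix m m R) (c : m → R)
    (h : ∀ i j, c i * M i j = P i j + Q i j) :
    (∑ i, c i) * M.det =
      ∑ j, (M.updateCol j (fun i => P i j)).det + ∑ j, (M.updateCol j (fun i => Q i j)).det := by
  have hrow : ∀ i, c i * M.det = (M.updateRow i (P i)).det + (M.updateRow i (Q i)).det := by
    intro i
    have hci : c i • M i = P i + Q i := funext (h i)
    rw [← det_updateRow_add, ← hci, det_updateRow_smul, updateRow_eq_self]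
  rw [Finset.sum_mul, Finset.sum_congr rfl fun i _ => hrow i, Finset.sum_add_distrib,
    sum_det_updateRow_eq_sum_det_updateCol, sum_det_updateRow_eq_sum_det_updateCol]

omit [Fintype m] in
theorem of_comp_update_eq_updateCol {β S : Type*} (f : m → β → S) (a : m → β) (j : m) (b : β) :
    of (fun i k => f i (Function.update a j b k)) =
      (of fun i k => f i (a k)).updateCol j (fun i => f i b) := by
  ext i k
  by_cases h : k = j
  · subst h; simp
  · simp [h]

theorem sum_mul_det_of_mul_apply_eq_add {β : Type*} (f : m → β → R) (c : m → R) (φ ψ : β → β)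
    (h : ∀ i b, c i * f i b = f i (φ b) + f i (ψ b)) (a : m → β) :
    (∑ i, c i) * (of fun i j => f i (a j)).det =
      ∑ j, (of fun i k => f i (Function.update a j (φ (a j)) k)).det +
        ∑ j, (of fun i k => f i (Function.update a j (ψ (a j)) k)).det := by
  simp only [of_comp_update_eq_updateCol]
  exact sum_mul_det_eq_sum_det_updateCol_add _ _ _ c fun i j => h i (a j)

end Matrix

theorem zpow_add_zpow_neg_mul_zpow_sub_zpow_neg {F : Type*} [Field F] {x : F} (hx : x ≠ 0)
    (r a : ℤ) :
    (x ^ r + x ^ (-r)) * (x ^ a - x ^ (-a)) =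
      (x ^ (a + r) - x ^ (-(a + r))) + (x ^ (a - r) - x ^ (-(a - r))) := by
  simp only [neg_add, neg_sub, zpow_add₀ hx, zpow_sub₀ hx, zpow_neg]
  field_simp
  ring

theorem X_ne_zero {n : ℕ} (i : Fin n) : X i ≠ 0 :=
  (map_ne_zero_iff _ (IsFractionRing.injective (MvPolynomial (Fin n) ℚ) (K n))).mpr
    (MvPolynomial.X_ne_zero i)

theorem pbar_mul_A_general (n : ℕ) (α : Fin n → ℕ) (r : ℤ) :
    (∑ i : Fin n, (X i ^ r + X i ^ (-r))) * A n (fun j => (α j : ℤ)) =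
      (∑ j : Fin n, A n (Function.update (fun k => (α k : ℤ)) j ((α j : ℤ) + r))) +
        ∑ j : Fin n, A n (Function.update (fun k => (α k : ℤ)) j ((α j : ℤ) - r)) :=
  Matrix.sum_mul_det_of_mul_apply_eq_add (fun i t => X i ^ t - X i ^ (-t)) _ (· + r) (· - r)
    (fun i t => zpow_add_zpow_neg_mul_zpow_sub_zpow_neg (X_ne_zero i) r t) _

/-- `p̄_r A_α = Σ_j A_{α + r ε_j} + Σ_j A_{α - r ε_j}`. -/
theorem pbar_mul_A (n : ℕ) (α : Fin n → ℕ) (r : ℤ) (hr : 1 ≤ r) :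
    (∑ i : Fin n, (X i ^ r + X i ^ (-r))) * A n (fun j => (α j : ℤ)) =
      (∑ j : Fin n, A n (Function.update (fun k => (α k : ℤ)) j ((α j : ℤ) + r))) +
        ∑ j : Fin n, A n (Function.update (fun k => (α k : ℤ)) j ((α j : ℤ) - r)) :=
  pbar_mul_A_general n α r
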